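/- arXiv:1101.4262 — 2 statements merged into one kernel-verified Lean document; each statement's English description precedes it below -/
import Mathlib

section
/- Let p(λ) = λ³ + (1.1-r)λ² + 0.2λ + 0.2(r+1). If -1 < r < 0.05, then every complex root of p has strictly negative real part. -/
/-!
Routh–Hurwitz for cubics: if `z = x + iy` with `x ≥ 0` were a root of `z³ + a z² + b z + c`,
the imaginary part of the equation forces `y = 0` or `y² = 3x² + 2ax + b`. In the first case
the real part is `x³ + a x² + b x + c > 0`; in the second it becomes
`-(8x³ + 8a x² + 2(a² + b) x + (ab - c)) < 0`. Here `a = 1.1 - r`, `b = 0.2`, `c = 0.2 (r + 1)`,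
and `ab - c = 0.2 (0.1 - 2r)`.
-/

theorem Complex.re_neg_of_cubic_eq_zero {a b c : ℝ} (ha : 0 < a) (hc : 0 < c) (habc : c < a * b)
    {z : ℂ} (hz : z ^ 3 + a * z ^ 2 + b * z + c = 0) : z.re < 0 := by
  set x := z.re
  set y := z.im
  have hre : x ^ 3 - 3 * x * y ^ 2 + a * (x ^ 2 - y ^ 2) + b * x + c = 0 := by
    have := congrArg Complex.re hz
    simp only [pow_succ, pow_zero, one_mul, add_re, mul_re, mul_im, ofReal_re, ofReal_im,
      zero_re] at this
    linear_combination this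
  have him : y * (3 * x ^ 2 - y ^ 2 + 2 * a * x + b) = 0 := by
    have := congrArg Complex.im hz
    simp only [pow_succ, pow_zero, one_mul, add_im, mul_re, mul_im, ofReal_re, ofReal_im,
      zero_im] at this
    linear_combination this
  have hb : 0 < b := pos_of_mul_pos_right (hc.trans habc) ha.le
  by_contra! hx
  rcases mul_eq_zero.mp him with hy | hy
  · rw [hy] at hre
    linarith [pow_nonneg hx 3, mul_nonneg ha.le (sq_nonneg x), mul_nonneg hb.le hx]
  · have hsum : 8 * x ^ 3 + 8 * a * x ^ 2 + 2 * (a ^ 2 + b) * x + (a * b - c) = 0 := by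
      linear_combination -hre + (a + 3 * x) * hy
    linarith [pow_nonneg hx 3, mul_nonneg ha.le (sq_nonneg x),
      mul_nonneg (add_nonneg (sq_nonneg a) hb.le) hx]

/-- Routh–Hurwitz: for -1 < r < 0.05, every complex root of
λ³ + (1.1-r)λ² + 0.2λ + 0.2(r+1) has negative real part. -/
theorem routh_hurwitz_stable (r : ℝ) (h1 : -1 < r) (h2 : r < 0.05) :
    ∀ lam : ℂ,
      lam ^ 3 + ((1.1 : ℂ) - (r : ℂ)) * lam ^ 2 + 0.2 * lam + 0.2 * ((r : ℂ) + 1) = 0 →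
      lam.re < 0 := by
  intro lam hlam
  refine Complex.re_neg_of_cubic_eq_zero (a := 1.1 - r) (b := 0.2) (c := 0.2 * (r + 1))
    (by linarith) (by linarith) (by nlinarith) ?_
  push_cast
  exact hlam
end

section
/- Let p(λ) = λ³ + (1.1-r)λ² + 0.2λ + 0.2(r+1). If 0.05 < r < 1.1, then p has a complex root with strictly positive real part. -/
/-!
With `a = 1.1 - r`, `b = 0.2`, `c = 0.2 (r + 1)`, the hypothesis `r > 0.05` says exactly that the
Routh–Hurwitz condition `a b ≥ c` fails for `x³ + a x² + b x + c`. Its failure forces a root in the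
open right half-plane: split off a real root `t`, which we may assume `≤ 0`, to get
`(x - t)(x² + B x + C)`, and observe `a b - c = B (t² + b)`. Either `B < 0`, and the two roots of
the quadratic factor have real parts summing to `-B > 0`, or the quadratic factor takes the negative
value `t² + b` at `-t ≥ 0` and so has a real root beyond `-t`.
-/

theorem Real.exists_cubic_eq_zero (a b c : ℝ) : ∃ t : ℝ, t ^ 3 + a * t ^ 2 + b * t + c = 0 := by
  set M := 1 + |a| + |b| + |c|
  have hM : 1 ≤ M := by simp only [M]; linarith [abs_nonneg a, abs_nonneg b, abs_nonneg c]
  have hM0 : 0 ≤ M := zero_le_one.trans hM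
  have hMsq : 1 ≤ M ^ 2 := one_le_pow₀ hM
  have hbound : |b| * M + |c| ≤ (|b| + |c|) * M ^ 2 := by
    nlinarith [mul_le_mul_of_nonneg_left (by nlinarith : M ≤ M ^ 2) (abs_nonneg b),
      mul_le_mul_of_nonneg_left hMsq (abs_nonneg c)]
  have hneg : (-M) ^ 3 + a * (-M) ^ 2 + b * (-M) + c ≤ 0 := by
    nlinarith [mul_le_mul_of_nonneg_right (le_abs_self a) (sq_nonneg M),
      mul_le_mul_of_nonneg_right (neg_abs_le b) hM0, le_abs_self c]
  have hpos : 0 ≤ M ^ 3 + a * M ^ 2 + b * M + c := by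
    nlinarith [mul_le_mul_of_nonneg_right (neg_abs_le a) (sq_nonneg M),
      mul_le_mul_of_nonneg_right (neg_abs_le b) hM0, neg_abs_le c]
  obtain ⟨t, -, ht⟩ := intermediate_value_Icc (f := fun x ↦ x ^ 3 + a * x ^ 2 + b * x + c)
    (by linarith) (by fun_prop) ⟨hneg, hpos⟩
  exact ⟨t, ht⟩

theorem Real.exists_quadratic_eq_zero_gt (B C s : ℝ) (hs : s ^ 2 + B * s + C < 0) :
    ∃ x > s, x ^ 2 + B * x + C = 0 := by
  have hdiscr : (2 * s + B) ^ 2 < B ^ 2 - 4 * C := by linarith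
  have hsqrt := Real.sq_sqrt ((sq_nonneg _).trans hdiscr.le)
  refine ⟨(-B + √(B ^ 2 - 4 * C)) / 2, ?_, ?_⟩
  · linarith [Real.lt_sqrt_of_sq_lt hdiscr]
  · linear_combination hsqrt / 4

theorem Complex.exists_quadratic_eq_zero_re_pos (B C : ℂ) (hB : B.re < 0) :
    ∃ z : ℂ, z ^ 2 + B * z + C = 0 ∧ 0 < z.re := by
  obtain ⟨s, hs⟩ := IsAlgClosed.exists_eq_mul_self (B ^ 2 - 4 * C)
  have hsum : ((-B + s) / 2).re + ((-B - s) / 2).re = -B.re := by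
    rw [← Complex.add_re, ← Complex.neg_re]; ring_nf
  rcases lt_or_ge 0 ((-B + s) / 2).re with h | h
  · exact ⟨(-B + s) / 2, by linear_combination (-1 / 4) * hs, h⟩
  · exact ⟨(-B - s) / 2, by linear_combination (-1 / 4) * hs, by linarith⟩

theorem exists_cubic_eq_zero_re_pos_of_mul_lt (a b c : ℝ) (h : a * b < c) :
    ∃ z : ℂ, z ^ 3 + a * z ^ 2 + b * z + c = 0 ∧ 0 < z.re := by
  obtain ⟨t, ht⟩ := Real.exists_cubic_eq_zero a b c
  rcases lt_or_ge 0 t with ht_pos | ht_nonpos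
  · exact ⟨t, by exact_mod_cast ht, by rwa [Complex.ofReal_re]⟩
  set B := a + t
  set C := b + B * t
  have htC : (t : ℂ) ^ 3 + a * (t : ℂ) ^ 2 + b * t + c = 0 := by exact_mod_cast ht
  have hfactor (z : ℂ) :
      z ^ 3 + a * z ^ 2 + b * z + c = (z - t) * (z ^ 2 + B * z + C) := by
    simp only [B, C]; push_cast; linear_combination htC
  have hHurwitz : a * b - c = B * (t ^ 2 + b) := by simp only [B]; linear_combination -ht
  suffices hquad : ∃ z : ℂ, z ^ 2 + B * z + C = 0 ∧ 0 < z.re by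
    obtain ⟨z, hz, hre⟩ := hquad
    exact ⟨z, by rw [hfactor, hz, mul_zero], hre⟩
  rcases lt_or_ge B 0 with hB | hB
  · exact Complex.exists_quadratic_eq_zero_re_pos B C (by simpa using hB)
  · have hb_neg : t ^ 2 + b < 0 := by nlinarith
    have hneg : (-t) ^ 2 + B * (-t) + C < 0 := by simp only [C]; linarith
    obtain ⟨x, hx, hroot⟩ := Real.exists_quadratic_eq_zero_gt B C (-t) hneg
    exact ⟨x, by exact_mod_cast hroot, by rw [Complex.ofReal_re]; linarith⟩

theorem unstable_root_exists_general (r : ℝ) (h1 : 0.05 < r) :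
    ∃ lam : ℂ,
      lam ^ 3 + ((1.1 : ℂ) - (r : ℂ)) * lam ^ 2 + 0.2 * lam + 0.2 * ((r : ℂ) + 1) = 0 ∧
      0 < lam.re := by
  have hHurwitz_fails : (1.1 - r) * 0.2 < 0.2 * (r + 1) := by linarith
  obtain ⟨z, hz, hre⟩ := exists_cubic_eq_zero_re_pos_of_mul_lt _ _ _ hHurwitz_fails
  push_cast at hz
  exact ⟨z, hz, hre⟩

/-- For 0.05 < r < 1.1, the cubic λ³ + (1.1-r)λ² + 0.2λ + 0.2(r+1) has a
complex root with strictly positive real part. -/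
theorem unstable_root_exists (r : ℝ) (h1 : 0.05 < r) (h2 : r < 1.1) :
    ∃ lam : ℂ,
      lam ^ 3 + ((1.1 : ℂ) - (r : ℂ)) * lam ^ 2 + 0.2 * lam + 0.2 * ((r : ℂ) + 1) = 0 ∧
      0 < lam.re :=
  unstable_root_exists_general r h1
end
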